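/- arXiv:1106.3979 — 5 statements merged into one kernel-verified Lean document; each statement's English description precedes it below -/
import Mathlib

section
/- Let ω be a binary sequence containing infinitely many 0's and infinitely many 1's, and let t be any integer. Then the set I_t = {n ≥ 1 : 1 − 2^{n-1} ≤ −a_n^ω + t ≤ 2^{n-1}} is nonempty. -/
def aseq (x : ℕ → ℤ) (n : ℕ) : ℤ :=
  (∑ i ∈ Finset.range n, x (i + 1) * 2 ^ i) - 2 ^ (n - 1)

/-!
Writing `S n = ∑_{i<n} x_{i+1} 2^i`, the condition `n ∈ I_t` reads `t ≤ S n ≤ t + 2^n - 1`.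
A `1` at a late position `j + 1` forces `S n ≥ 2^j > t` for all `n > j`, and a `0` at a still later
position `m + 1` gives `S (m + 1) = S m ≤ 2^m - 1 < t + 2^(m+1) - 1` as soon as `2^m > -t`.
-/

def binSum (x : ℕ → ℤ) (n : ℕ) : ℤ :=
  ∑ i ∈ Finset.range n, x (i + 1) * 2 ^ i

section BinSum

variable {x : ℕ → ℤ}

theorem aseq_eq_binSum_sub (x : ℕ → ℤ) (n : ℕ) : aseq x n = binSum x n - 2 ^ (n - 1) := rfl

theorem binSum_mono (hx : ∀ i, 0 ≤ x i) : Monotone (binSum x) := fun _ _ hab =>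
  Finset.sum_le_sum_of_subset_of_nonneg (Finset.range_subset_range.2 hab)
    fun i _ _ => mul_nonneg (hx _) (by positivity)

theorem binSum_le_two_pow_sub_one (hx : ∀ i, x i ≤ 1) (n : ℕ) : binSum x n ≤ 2 ^ n - 1 :=
  calc binSum x n ≤ ∑ i ∈ Finset.range n, (2 : ℤ) ^ i :=
        Finset.sum_le_sum fun i _ =>
          mul_le_of_le_one_left (by positivity) (hx (i + 1))
    _ = 2 ^ n - 1 := by simpa using geom_sum_mul (2 : ℤ) n

theorem two_pow_le_binSum (hx : ∀ i, 0 ≤ x i) {j n : ℕ} (hj : x (j + 1) = 1) (hjn : j < n) :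
    2 ^ j ≤ binSum x n :=
  calc (2 : ℤ) ^ j = x (j + 1) * 2 ^ j := by rw [hj, one_mul]
    _ ≤ binSum x (j + 1) :=
        Finset.single_le_sum (f := fun i => x (i + 1) * 2 ^ i)
          (fun i _ => mul_nonneg (hx _) (by positivity)) (Finset.self_mem_range_succ j)
    _ ≤ binSum x n := binSum_mono hx hjn

theorem binSum_succ_of_eq_zero {m : ℕ} (hm : x (m + 1) = 0) : binSum x (m + 1) = binSum x m := by
  simp [binSum, Finset.sum_range_succ, hm]

end BinSum

theorem stmt7 (x : ℕ → ℤ) (hx : ∀ i, x i = 0 ∨ x i = 1)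
    (h0 : {i : ℕ | x i = 0}.Infinite) (h1 : {i : ℕ | x i = 1}.Infinite) (t : ℤ) :
    ∃ n : ℕ, 1 ≤ n ∧ 1 - 2 ^ (n - 1) ≤ -aseq x n + t ∧ -aseq x n + t ≤ 2 ^ (n - 1) := by
  have hx_nonneg : ∀ i, 0 ≤ x i := fun i => by rcases hx i with h | h <;> simp [h]
  have hx_le_one : ∀ i, x i ≤ 1 := fun i => by rcases hx i with h | h <;> simp [h]
  obtain ⟨K, hK⟩ := pow_unbounded_of_one_lt |t| (by norm_num : (1 : ℤ) < 2)
  obtain ⟨i, hi1, hKi⟩ := h1.exists_gt K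
  obtain ⟨j, rfl⟩ : ∃ j, i = j + 1 := ⟨i - 1, by omega⟩
  obtain ⟨i', hi'0, hii'⟩ := h0.exists_gt (j + 1)
  obtain ⟨m, rfl⟩ : ∃ m, i' = m + 1 := ⟨i' - 1, by omega⟩
  have hKm : (2 : ℤ) ^ K ≤ 2 ^ m := pow_le_pow_right₀ (by norm_num) (by omega)
  have hKj : (2 : ℤ) ^ K ≤ 2 ^ j := pow_le_pow_right₀ (by norm_num) (by omega)
  have hlower : 2 ^ j ≤ binSum x m := two_pow_le_binSum hx_nonneg hi1 (by omega)
  have hupper : binSum x m ≤ 2 ^ m - 1 := binSum_le_two_pow_sub_one hx_le_one m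
  refine ⟨m + 1, by omega, ?_, ?_⟩ <;>
  · rw [aseq_eq_binSum_sub, binSum_succ_of_eq_zero hi'0, Nat.add_sub_cancel]
    linarith [abs_lt.1 hK, pow_succ (2 : ℤ) m]
end

section
/- Let ω = (x_i) and ω' = (y_i) be binary sequences and t ∈ ℤ. If there exists n₀ such that −a_n^{ω'} = −a_n^ω + t for all n ≥ n₀, then x_n = y_n for all n > n₀; in particular ω and ω' are cofinal. -/
theorem aseq_succ (x : ℕ → ℤ) (n : ℕ) :
    aseq x (n + 1) = aseq x n + x (n + 1) * 2 ^ n - (2 ^ n - 2 ^ (n - 1)) := by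
  simp only [aseq, Finset.sum_range_succ, Nat.add_sub_cancel]
  ring

theorem eq_of_aseq_sub_succ_eq {x y : ℕ → ℤ} {n : ℕ}
    (h : aseq x (n + 1) - aseq y (n + 1) = aseq x n - aseq y n) : x (n + 1) = y (n + 1) := by
  rw [aseq_succ, aseq_succ] at h
  have hmul : x (n + 1) * 2 ^ n = y (n + 1) * 2 ^ n := by linarith
  exact mul_right_cancel₀ (by positivity) hmul

theorem stmt8_general (x y : ℕ → ℤ)
    (t : ℤ) (n₀ : ℕ) (h : ∀ n, n₀ ≤ n → -aseq y n = -aseq x n + t) :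
    ∀ n, n₀ < n → x n = y n := by
  intro n hn
  obtain ⟨m, rfl⟩ : ∃ m, n = m + 1 := ⟨n - 1, by omega⟩
  apply eq_of_aseq_sub_succ_eq
  linarith [h m (by omega), h (m + 1) (by omega)]

theorem stmt8 (x y : ℕ → ℤ) (hx : ∀ i, x i = 0 ∨ x i = 1) (hy : ∀ i, y i = 0 ∨ y i = 1)
    (t : ℤ) (n₀ : ℕ) (h : ∀ n, n₀ ≤ n → -aseq y n = -aseq x n + t) :
    ∀ n, n₀ < n → x n = y n :=
  stmt8_general x y t n₀ h
end

section
/- Let ω, ω' be binary sequences differing only at index n, and define Φ_n : ℤ → ℤ by Φ_n(z) = z − ((1−x_n) − x_n)·2^{n-1}. Then Φ_n is a graph isomorphism from X_ω to X_{ω'}, i.e. it is a bijection mapping each edge set E_ω^k bijectively onto E_{ω'}^k for every k ≥ 0. -/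
def edgeSet (x : ℕ → ℤ) : ℕ → Set (ℤ × ℤ)
  | 0 => {p | ∃ z : ℤ, p = (z, z + 1)}
  | n + 1 => {p | ∃ z : ℤ,
      p = (2 ^ (n + 1) * z - aseq x (n + 1), 2 ^ (n + 1) * (z + 1) - aseq x (n + 1))}

/-!
Changing `x n` changes `aseq x m` by `c = (y n - x n) * 2 ^ (n - 1)` when `n ≤ m` and not at all
otherwise. Every edge set `E^k` is a coset of `2 ^ k ℤ` shifted by `aseq`, so translating by `-c`
carries `E_x^k` onto `E_y^k` as soon as `2 ^ k` divides `aseq y k - aseq x k - c`: for `k ≥ n` this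
difference is `0`, and for `k < n` it is `-c`, a multiple of `2 ^ (n - 1)`.
-/

def edgeProgression (a b : ℤ) : Set (ℤ × ℤ) :=
  {p | ∃ z : ℤ, p = (a * z - b, a * (z + 1) - b)}

lemma edgeSet_zero (x : ℕ → ℤ) : edgeSet x 0 = edgeProgression 1 0 := by
  simp [edgeSet, edgeProgression]

lemma edgeSet_succ (x : ℕ → ℤ) (m : ℕ) :
    edgeSet x (m + 1) = edgeProgression (2 ^ (m + 1)) (aseq x (m + 1)) :=
  rfl

lemma image_sub_edgeProgression {a b b' c : ℤ} (h : a ∣ b' - b - c) :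
    (fun p : ℤ × ℤ => (p.1 - c, p.2 - c)) '' edgeProgression a b = edgeProgression a b' := by
  obtain ⟨d, hd⟩ := h
  ext p
  simp only [edgeProgression, Set.mem_image, Set.mem_ofPred_eq]
  constructor
  · rintro ⟨q, ⟨z, rfl⟩, rfl⟩
    refine ⟨z + d, ?_⟩
    simp only [Prod.ext_iff]
    constructor <;> linear_combination hd
  · rintro ⟨z, rfl⟩
    refine ⟨_, ⟨z - d, rfl⟩, ?_⟩
    simp only [Prod.ext_iff]
    constructor <;> linear_combination hd

lemma aseq_sub_aseq (x y : ℕ → ℤ) (m : ℕ) :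
    aseq y m - aseq x m = ∑ i ∈ Finset.range m, (y (i + 1) - x (i + 1)) * 2 ^ i := by
  simp only [aseq, sub_sub_sub_cancel_right, ← Finset.sum_sub_distrib, sub_mul]

lemma aseq_sub_aseq_of_forall_ne_eq {x y : ℕ → ℤ} {n : ℕ} (hn : 1 ≤ n) (hy : ∀ i, i ≠ n → y i = x i)
    (m : ℕ) :
    aseq y m - aseq x m = if n ≤ m then (y n - x n) * 2 ^ (n - 1) else 0 := by
  have hterm : ∀ i, (y (i + 1) - x (i + 1)) * 2 ^ i =
      if n - 1 = i then (y n - x n) * 2 ^ (n - 1) else 0 := by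
    intro i
    split_ifs with hi
    · subst hi
      rw [Nat.sub_add_cancel hn]
    · rw [hy (i + 1) (by omega), sub_self, zero_mul]
  simp only [aseq_sub_aseq, hterm, Finset.sum_ite_eq, Finset.mem_range]
  exact if_congr (by omega) rfl rfl

theorem stmt10_general (x y : ℕ → ℤ) (n : ℕ) (hn : 1 ≤ n)
    (hyn : y n = 1 - x n) (hy : ∀ i, i ≠ n → y i = x i) :
    Function.Bijective (fun z : ℤ => z - ((1 - x n) - x n) * 2 ^ (n - 1)) ∧
    ∀ k : ℕ, (fun p : ℤ × ℤ =>
        (p.1 - ((1 - x n) - x n) * 2 ^ (n - 1), p.2 - ((1 - x n) - x n) * 2 ^ (n - 1))) ''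
      edgeSet x k = edgeSet y k := by
  refine ⟨(Equiv.subRight _).bijective, fun k => ?_⟩
  rcases k with _ | m
  · simp only [edgeSet_zero]
    exact image_sub_edgeProgression (one_dvd _)
  · rw [edgeSet_succ, edgeSet_succ]
    apply image_sub_edgeProgression
    rw [aseq_sub_aseq_of_forall_ne_eq hn hy, hyn]
    split_ifs with hnm
    · simp
    · rw [zero_sub, dvd_neg]
      exact (pow_dvd_pow 2 (by omega)).mul_left _

theorem stmt10 (x y : ℕ → ℤ) (hx : ∀ i, x i = 0 ∨ x i = 1) (n : ℕ) (hn : 1 ≤ n)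
    (hyn : y n = 1 - x n) (hy : ∀ i, i ≠ n → y i = x i) :
    Function.Bijective (fun z : ℤ => z - ((1 - x n) - x n) * 2 ^ (n - 1)) ∧
    ∀ k : ℕ, (fun p : ℤ × ℤ =>
        (p.1 - ((1 - x n) - x n) * 2 ^ (n - 1), p.2 - ((1 - x n) - x n) * 2 ^ (n - 1))) ''
      edgeSet x k = edgeSet y k :=
  stmt10_general x y n hn hyn hy
end

section
/- For any binary sequence ω, the arithmetic progressions 2^n ℤ − a_n^ω, for n ≥ 1, are pairwise disjoint subsets of ℤ. -/
lemma mem_progression_iff (d a w : ℤ) : (∃ z : ℤ, w = d * z - a) ↔ w ≡ -a [ZMOD d] := by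
  rw [Int.modEq_comm, Int.modEq_iff_dvd, sub_neg_eq_add]
  exact exists_congr fun z => by constructor <;> intro h <;> linarith

lemma sum_range_modEq_of_le (x : ℕ → ℤ) {m n : ℕ} (hmn : m ≤ n) :
    ∑ i ∈ Finset.range n, x (i + 1) * 2 ^ i ≡
      ∑ i ∈ Finset.range m, x (i + 1) * 2 ^ i [ZMOD 2 ^ m] := by
  rw [← Finset.sum_range_add_sum_Ico _ hmn, Int.modEq_iff_dvd, sub_add_cancel_left, dvd_neg]
  exact Finset.dvd_sum fun i hi =>
    (pow_dvd_pow 2 (Finset.mem_Ico.mp hi).1).mul_left _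

lemma aseq_modEq_of_lt (x : ℕ → ℤ) {m n : ℕ} (hmn : m < n) :
    aseq x n ≡ aseq x m + 2 ^ (m - 1) [ZMOD 2 ^ m] := by
  have hpow : 2 ^ (n - 1) ≡ 0 [ZMOD 2 ^ m] :=
    Int.modEq_zero_iff_dvd.mpr (pow_dvd_pow 2 (by omega))
  simpa [aseq] using (sum_range_modEq_of_le x hmn.le).sub hpow

lemma not_two_pow_pred_modEq_zero {m : ℕ} (hm : 1 ≤ m) : ¬ 2 ^ (m - 1) ≡ 0 [ZMOD 2 ^ m] := by
  rw [Int.modEq_zero_iff_dvd, pow_dvd_pow_iff two_ne_zero (by decide)]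
  omega

lemma disjoint_progressions_of_lt (x : ℕ → ℤ) {m n : ℕ} (hm : 1 ≤ m) (hmn : m < n) :
    Disjoint {w : ℤ | ∃ z : ℤ, w = 2 ^ m * z - aseq x m}
      {w : ℤ | ∃ z : ℤ, w = 2 ^ n * z - aseq x n} := by
  refine Set.disjoint_left.mpr fun w hwm hwn => not_two_pow_pred_modEq_zero hm ?_
  rw [Set.mem_ofPred_eq, mem_progression_iff] at hwm hwn
  have hwn' : w ≡ -aseq x n [ZMOD 2 ^ m] := hwn.of_dvd (pow_dvd_pow 2 hmn.le)
  have hsame : aseq x m ≡ aseq x n [ZMOD 2 ^ m] := by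
    simpa using (hwm.symm.trans hwn').neg
  exact Int.ModEq.add_left_cancel' (aseq x m) <| by
    simpa using hsame.trans (aseq_modEq_of_lt x hmn)

theorem stmt15_general (x : ℕ → ℤ)
    (m n : ℕ) (hm : 1 ≤ m) (hn : 1 ≤ n) (hmn : m ≠ n) :
    {w : ℤ | ∃ z : ℤ, w = 2 ^ m * z - aseq x m} ∩
      {w : ℤ | ∃ z : ℤ, w = 2 ^ n * z - aseq x n} = ∅ := by
  rw [← Set.disjoint_iff_inter_eq_empty]
  rcases hmn.lt_or_gt with h | h
  · exact disjoint_progressions_of_lt x hm h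
  · exact (disjoint_progressions_of_lt x hn h).symm

theorem stmt15 (x : ℕ → ℤ) (hx : ∀ i, x i = 0 ∨ x i = 1)
    (m n : ℕ) (hm : 1 ≤ m) (hn : 1 ≤ n) (hmn : m ≠ n) :
    {w : ℤ | ∃ z : ℤ, w = 2 ^ m * z - aseq x m} ∩
      {w : ℤ | ∃ z : ℤ, w = 2 ^ n * z - aseq x n} = ∅ :=
  stmt15_general x m n hm hn hmn
end

section
/- In the graph X_ω for any binary sequence ω, every vertex z ∈ ℤ is incident to exactly two edges of E_ω^0, and to at most two edges of ⋃_{n≥1} E_ω^n; a vertex z is incident to exactly two edges of E_ω^n for some unique n ≥ 1 iff z ≡ −a_n^ω (mod 2^n). In particular every vertex has degree at most 4. -/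
def inc (x : ℕ → ℤ) (k : ℕ) (z : ℤ) : Set (ℤ × ℤ) :=
  {e ∈ edgeSet x k | z = e.1 ∨ z = e.2}

/-!
A vertex `z` meets an edge of `E^n` (`n ≥ 1`) only if `z` lies in the progression
`2^n ℤ - a_n`, and then it meets exactly the two edges `(z, z + 2^n)` and `(z - 2^n, z)`.
For `1 ≤ n < m` we have `a_m - a_n ≡ 2^(n-1) (mod 2^n)`, so the progressions are pairwise
disjoint: every vertex lies on at most one of them, and has at most two edges from
`⋃_{n ≥ 1} E^n` besides its two edges `(z, z + 1)`, `(z - 1, z)` from `E^0`.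
-/

theorem two_pow_dvd_aseq_sub_aseq_sub (x : ℕ → ℤ) {n m : ℕ} (hnm : n < m) :
    (2 : ℤ) ^ n ∣ aseq x m - aseq x n - 2 ^ (n - 1) := by
  have hsplit : aseq x m - aseq x n - 2 ^ (n - 1)
      = (∑ i ∈ Finset.Ico n m, x (i + 1) * 2 ^ i) - 2 ^ (m - 1) := by
    unfold aseq
    rw [Finset.sum_Ico_eq_sub _ hnm.le]
    ring
  rw [hsplit]
  refine dvd_sub (Finset.dvd_sum fun i hi => ?_) (pow_dvd_pow 2 (by omega))
  exact (pow_dvd_pow 2 (Finset.mem_Ico.mp hi).1).mul_left _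

theorem not_two_pow_dvd_aseq_sub_aseq (x : ℕ → ℤ) {n m : ℕ} (hn : 1 ≤ n) (hnm : n < m) :
    ¬ (2 : ℤ) ^ n ∣ aseq x m - aseq x n := by
  intro hdvd
  have hhalf : (2 : ℤ) ^ n ∣ 2 ^ (n - 1) := by
    simpa using dvd_sub hdvd (two_pow_dvd_aseq_sub_aseq_sub x hnm)
  have hlt : (2 : ℤ) ^ (n - 1) < 2 ^ n := pow_lt_pow_right₀ (by norm_num) (by omega)
  exact absurd (Int.le_of_dvd (by positivity) hhalf) (not_le.mpr hlt)

theorem eq_of_two_pow_dvd_add_aseq (x : ℕ → ℤ) {z : ℤ} {n m : ℕ} (hn : 1 ≤ n) (hm : 1 ≤ m)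
    (hzn : (2 : ℤ) ^ n ∣ z + aseq x n) (hzm : (2 : ℤ) ^ m ∣ z + aseq x m) : n = m := by
  wlog hle : n ≤ m generalizing n m
  · exact (this hm hn hzm hzn (by omega)).symm
  by_contra hne
  have hnm : n < m := by omega
  refine not_two_pow_dvd_aseq_sub_aseq x hn hnm ?_
  have hdiff : aseq x m - aseq x n = (z + aseq x m) - (z + aseq x n) := by ring
  rw [hdiff]
  exact dvd_sub ((pow_dvd_pow 2 hle).trans hzm) hzn

theorem inc_zero (x : ℕ → ℤ) (z : ℤ) : inc x 0 z = {(z, z + 1), (z - 1, z)} := by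
  ext e
  simp only [inc, edgeSet, Set.mem_ofPred_eq, Set.mem_insert_iff, Set.mem_singleton_iff]
  constructor
  · rintro ⟨⟨w, rfl⟩, rfl | rfl⟩
    · exact Or.inl rfl
    · exact Or.inr (by simp)
  · rintro (rfl | rfl)
    · exact ⟨⟨z, rfl⟩, Or.inl rfl⟩
    · exact ⟨⟨z - 1, by simp⟩, Or.inr rfl⟩

theorem inc_subset (x : ℕ → ℤ) (n : ℕ) (z : ℤ) :
    inc x n z ⊆ {(z, z + 2 ^ n), (z - 2 ^ n, z)} := by
  cases n with
  | zero => simp [inc_zero]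
  | succ n =>
    rintro e ⟨⟨w, rfl⟩, rfl | rfl⟩
    · exact Or.inl (Prod.ext rfl (by ring))
    · exact Or.inr (Prod.ext (by ring) rfl)

theorem two_pow_dvd_add_aseq_of_mem_inc {x : ℕ → ℤ} {n : ℕ} {z : ℤ} {e : ℤ × ℤ}
    (hn : 1 ≤ n) (he : e ∈ inc x n z) : (2 : ℤ) ^ n ∣ z + aseq x n := by
  obtain ⟨n, rfl⟩ : ∃ k, n = k + 1 := ⟨n - 1, by omega⟩
  obtain ⟨⟨w, rfl⟩, rfl | rfl⟩ := he
  · exact ⟨w, by ring⟩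
  · exact ⟨w + 1, by ring⟩

theorem inc_eq_of_two_pow_dvd {x : ℕ → ℤ} {n : ℕ} {z : ℤ} (hn : 1 ≤ n)
    (hz : (2 : ℤ) ^ n ∣ z + aseq x n) : inc x n z = {(z, z + 2 ^ n), (z - 2 ^ n, z)} := by
  obtain ⟨n, rfl⟩ : ∃ k, n = k + 1 := ⟨n - 1, by omega⟩
  obtain ⟨w, hw⟩ := hz
  refine (inc_subset x _ z).antisymm ?_
  rintro e (rfl | rfl)
  · exact ⟨⟨w, Prod.ext (by linarith) (by linarith)⟩, Or.inl rfl⟩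
  · exact ⟨⟨w - 1, Prod.ext (by linarith) (by linarith)⟩, Or.inr rfl⟩

theorem ncard_edge_pair {z d : ℤ} (hd : d ≠ 0) :
    ({(z, z + d), (z - d, z)} : Set (ℤ × ℤ)).ncard = 2 :=
  Set.ncard_pair fun h => hd (by linarith [congrArg Prod.fst h])

theorem ncard_edge_pair_le (z d : ℤ) : ({(z, z + d), (z - d, z)} : Set (ℤ × ℤ)).ncard ≤ 2 :=
  (Set.ncard_insert_le _ _).trans (by simp)

theorem ncard_inc_eq_two_iff (x : ℕ → ℤ) {n : ℕ} (hn : 1 ≤ n) (z : ℤ) :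
    (inc x n z).ncard = 2 ↔ (2 : ℤ) ^ n ∣ z + aseq x n := by
  refine ⟨fun h => ?_, fun hz => ?_⟩
  · obtain ⟨e, he⟩ := Set.nonempty_of_ncard_ne_zero (h ▸ two_ne_zero)
    exact two_pow_dvd_add_aseq_of_mem_inc hn he
  · rw [inc_eq_of_two_pow_dvd hn hz]
    exact ncard_edge_pair (by positivity)

theorem exists_iUnion_inc_subset (x : ℕ → ℤ) (z : ℤ) :
    ∃ n : ℕ, (⋃ m ∈ {m : ℕ | 1 ≤ m}, inc x m z) ⊆ {(z, z + 2 ^ n), (z - 2 ^ n, z)} := by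
  by_cases hlevel : ∃ n, 1 ≤ n ∧ (2 : ℤ) ^ n ∣ z + aseq x n
  · obtain ⟨n, hn, hz⟩ := hlevel
    refine ⟨n, Set.iUnion₂_subset fun m (hm : 1 ≤ m) e he => ?_⟩
    obtain rfl := eq_of_two_pow_dvd_add_aseq x hm hn
      (two_pow_dvd_add_aseq_of_mem_inc hm he) hz
    exact inc_subset x m z he
  · refine ⟨0, Set.iUnion₂_subset fun m (hm : 1 ≤ m) e he => ?_⟩
    exact absurd ⟨m, hm, two_pow_dvd_add_aseq_of_mem_inc hm he⟩ hlevel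

theorem iUnion_inc_pos_finite (x : ℕ → ℤ) (z : ℤ) :
    (⋃ n ∈ {n : ℕ | 1 ≤ n}, inc x n z).Finite :=
  let ⟨_, hsub⟩ := exists_iUnion_inc_subset x z
  (Set.toFinite _).subset hsub

theorem ncard_iUnion_inc_pos_le (x : ℕ → ℤ) (z : ℤ) :
    (⋃ n ∈ {n : ℕ | 1 ≤ n}, inc x n z).ncard ≤ 2 :=
  let ⟨_, hsub⟩ := exists_iUnion_inc_subset x z
  (Set.ncard_le_ncard hsub).trans (ncard_edge_pair_le _ _)

theorem iUnion_inc_subset (x : ℕ → ℤ) (z : ℤ) :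
    (⋃ k : ℕ, inc x k z) ⊆ inc x 0 z ∪ ⋃ n ∈ {n : ℕ | 1 ≤ n}, inc x n z := by
  refine Set.iUnion_subset fun k => ?_
  rcases Nat.eq_zero_or_pos k with rfl | hk
  · exact Set.subset_union_left
  · exact (Set.subset_biUnion_of_mem (u := fun n => inc x n z) hk).trans Set.subset_union_right

theorem stmt16_general (x : ℕ → ℤ) :
    (∀ z : ℤ, (inc x 0 z).ncard = 2) ∧
    (∀ z : ℤ, (⋃ n ∈ {n : ℕ | 1 ≤ n}, inc x n z).ncard ≤ 2) ∧
    (∀ z : ℤ, ∀ n : ℕ, 1 ≤ n →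
      ((inc x n z).ncard = 2 ↔ ∃ w : ℤ, z = 2 ^ n * w - aseq x n)) ∧
    (∀ z : ℤ, ∀ n m : ℕ, 1 ≤ n → 1 ≤ m →
      (inc x n z).ncard = 2 → (inc x m z).ncard = 2 → n = m) ∧
    (∀ z : ℤ, (⋃ k : ℕ, inc x k z).ncard ≤ 4) := by
  have hzero (z : ℤ) : (inc x 0 z).ncard = 2 := by
    rw [inc_zero]
    exact ncard_edge_pair one_ne_zero
  refine ⟨hzero, ncard_iUnion_inc_pos_le x, fun z n hn => ?_, fun z n m hn hm hzn hzm => ?_,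
    fun z => ?_⟩
  · rw [ncard_inc_eq_two_iff x hn]
    exact exists_congr fun w => by constructor <;> intro h <;> linarith
  · exact eq_of_two_pow_dvd_add_aseq x hn hm ((ncard_inc_eq_two_iff x hn z).mp hzn)
      ((ncard_inc_eq_two_iff x hm z).mp hzm)
  · have hfinite : (inc x 0 z ∪ ⋃ n ∈ {n : ℕ | 1 ≤ n}, inc x n z).Finite :=
      ((Set.toFinite _).subset (inc_subset x 0 z)).union (iUnion_inc_pos_finite x z)
    calc (⋃ k : ℕ, inc x k z).ncard
        ≤ (inc x 0 z ∪ ⋃ n ∈ {n : ℕ | 1 ≤ n}, inc x n z).ncard :=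
          Set.ncard_le_ncard (iUnion_inc_subset x z) hfinite
      _ ≤ (inc x 0 z).ncard + (⋃ n ∈ {n : ℕ | 1 ≤ n}, inc x n z).ncard := Set.ncard_union_le _ _
      _ ≤ 4 := by linarith [hzero z, ncard_iUnion_inc_pos_le x z]

theorem stmt16 (x : ℕ → ℤ) (hx : ∀ i, x i = 0 ∨ x i = 1) :
    (∀ z : ℤ, (inc x 0 z).ncard = 2) ∧
    (∀ z : ℤ, (⋃ n ∈ {n : ℕ | 1 ≤ n}, inc x n z).ncard ≤ 2) ∧
    (∀ z : ℤ, ∀ n : ℕ, 1 ≤ n →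
      ((inc x n z).ncard = 2 ↔ ∃ w : ℤ, z = 2 ^ n * w - aseq x n)) ∧
    (∀ z : ℤ, ∀ n m : ℕ, 1 ≤ n → 1 ≤ m →
      (inc x n z).ncard = 2 → (inc x m z).ncard = 2 → n = m) ∧
    (∀ z : ℤ, (⋃ k : ℕ, inc x k z).ncard ≤ 4) :=
  stmt16_general x
end
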